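/- Let N ≥ 1, w > 0, σ > 0. Suppose x ∈ ℝ^{n_x} belongs to the feasibility region of HMPC, and let (x^0,…,x^N, u^0,…,u^{N−1}, (x̂_e, x̂_s, x̂_c), (û_e, û_s, û_c)) be any feasible solution for x. Then the successor state x⁺ := A x + B u^0 also belongs to the feasibility region of HMPC. (Since the feasibility conditions do not involve the reference, this holds for any reference parameters at the next time step, not necessarily obtained by the harmonic update.) -/
import Mathlib


open Matrix Filter

/-- Vectors in `ℝ^n`. -/
abbrev RVec (n : ℕ) := Fin n → ℝ

/-- A parameter triple `(v_e, v_s, v_c) ∈ (ℝ^m)³` of a harmonic signal. -/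
abbrev HTriple (n : ℕ) := RVec n × RVec n × RVec n

/-- A parameter pair `((x̂_e, x̂_s, x̂_c), (û_e, û_s, û_c))`. -/
abbrev HParams (nx nu : ℕ) := HTriple nx × HTriple nu

/-- Value at (relative) time `k` of the harmonic signal parameterized by the triple `v`
with frequency `w`: `v_e + v_s sin(w k) + v_c cos(w k)`. -/
noncomputable def hSeq {m : ℕ} (w : ℝ) (v : HTriple m) (k : ℕ) : RVec m :=
  v.1 + Real.sin (w * (k : ℝ)) • v.2.1 + Real.cos (w * (k : ℝ)) • v.2.2

/-- The transform `T̂_w^m` acting on parameter triples: the identity acts on `v_e` and the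
rotation `T_w^m = [[cos w · I, -sin w · I], [sin w · I, cos w · I]]` acts on `(v_s, v_c)`. -/
noncomputable def hatT {m : ℕ} (w : ℝ) (v : HTriple m) : HTriple m :=
  (v.1, Real.cos w • v.2.1 - Real.sin w • v.2.2, Real.sin w • v.2.1 + Real.cos w • v.2.2)

/-- Membership in the set `D` (harmonic parameters consistent with the dynamics `x⁺ = Ax + Bu`). -/
def inD {nx nu : ℕ} (A : Matrix (Fin nx) (Fin nx) ℝ) (B : Matrix (Fin nx) (Fin nu) ℝ)
    (w : ℝ) (p : HParams nx nu) : Prop :=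
  p.1.1 = A.mulVec p.1.1 + B.mulVec p.2.1 ∧
  Real.cos w • p.1.2.1 - Real.sin w • p.1.2.2 = A.mulVec p.1.2.1 + B.mulVec p.2.2.1 ∧
  Real.sin w • p.1.2.1 + Real.cos w • p.1.2.2 = A.mulVec p.1.2.2 + B.mulVec p.2.2.2

/-- Membership in the set `C_σ` (second-order-cone conditions guaranteeing constraint
satisfaction of the harmonic signal). -/
def inC {nx nu ny : ℕ} (E : Matrix (Fin ny) (Fin nx) ℝ) (F : Matrix (Fin ny) (Fin nu) ℝ)
    (ylo yhi : RVec ny) (σ : ℝ) (p : HParams nx nu) : Prop :=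
  ∀ i : Fin ny,
    Real.sqrt ((E.mulVec p.1.2.1 + F.mulVec p.2.2.1) i ^ 2
        + (E.mulVec p.1.2.2 + F.mulVec p.2.2.2) i ^ 2)
      ≤ yhi i - σ - (E.mulVec p.1.1 + F.mulVec p.2.1) i ∧
    Real.sqrt ((E.mulVec p.1.2.1 + F.mulVec p.2.2.1) i ^ 2
        + (E.mulVec p.1.2.2 + F.mulVec p.2.2.2) i ^ 2)
      ≤ (E.mulVec p.1.1 + F.mulVec p.2.1) i - ylo i - σ

/-- The set `D ∩ C_σ` of admissible harmonic parameters. -/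
def paramSet {nx nu ny : ℕ} (A : Matrix (Fin nx) (Fin nx) ℝ) (B : Matrix (Fin nx) (Fin nu) ℝ)
    (E : Matrix (Fin ny) (Fin nx) ℝ) (F : Matrix (Fin ny) (Fin nu) ℝ)
    (ylo yhi : RVec ny) (w σ : ℝ) : Set (HParams nx nu) :=
  {p | inD A B w p ∧ inC E F ylo yhi σ p}

/-- The quadratic form `‖v‖²_M = vᵀ M v`. -/
def quadForm {n : ℕ} (M : Matrix (Fin n) (Fin n) ℝ) (v : RVec n) : ℝ :=
  v ⬝ᵥ M.mulVec v

/-- The offset cost `V_h` with reference parameters `r` evaluated at parameters `p`. -/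
def Vh {nx nu : ℕ} (Te Th : Matrix (Fin nx) (Fin nx) ℝ) (Se Sh : Matrix (Fin nu) (Fin nu) ℝ)
    (r p : HParams nx nu) : ℝ :=
  quadForm Te (p.1.1 - r.1.1) + quadForm Th (p.1.2.1 - r.1.2.1)
    + quadForm Th (p.1.2.2 - r.1.2.2)
    + quadForm Se (p.2.1 - r.2.1) + quadForm Sh (p.2.2.1 - r.2.2.1)
    + quadForm Sh (p.2.2.2 - r.2.2.2)

/-- `p` is the unique minimizer of `f` on `S`. -/
def IsUniqueMinOn {α : Type*} (f : α → ℝ) (S : Set α) (p : α) : Prop :=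
  p ∈ S ∧ ∀ q ∈ S, q ≠ p → f p < f q

/-- `(xs, us, p)` is a feasible solution of the HMPC optimization problem for the state `x`. -/
def FeasSol {nx nu ny : ℕ} (A : Matrix (Fin nx) (Fin nx) ℝ) (B : Matrix (Fin nx) (Fin nu) ℝ)
    (E : Matrix (Fin ny) (Fin nx) ℝ) (F : Matrix (Fin ny) (Fin nu) ℝ)
    (ylo yhi : RVec ny) (w σ : ℝ) (N : ℕ) (x : RVec nx)
    (xs : ℕ → RVec nx) (us : ℕ → RVec nu) (p : HParams nx nu) : Prop :=
  xs 0 = x ∧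
  (∀ k < N, xs (k + 1) = A.mulVec (xs k) + B.mulVec (us k)) ∧
  (∀ k < N, ∀ i, ylo i ≤ (E.mulVec (xs k) + F.mulVec (us k)) i
      ∧ (E.mulVec (xs k) + F.mulVec (us k)) i ≤ yhi i) ∧
  xs N = hSeq w p.1 N ∧
  inD A B w p ∧ inC E F ylo yhi σ p

/-- `x` belongs to the feasibility region of the HMPC optimization problem. -/
def Feasible {nx nu ny : ℕ} (A : Matrix (Fin nx) (Fin nx) ℝ) (B : Matrix (Fin nx) (Fin nu) ℝ)
    (E : Matrix (Fin ny) (Fin nx) ℝ) (F : Matrix (Fin ny) (Fin nu) ℝ)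
    (ylo yhi : RVec ny) (w σ : ℝ) (N : ℕ) (x : RVec nx) : Prop :=
  ∃ xs us p, FeasSol A B E F ylo yhi w σ N x xs us p

/-- The HMPC cost `J` of a solution `(xs, us, p)` with reference parameters `r`. -/
noncomputable def Jcost {nx nu : ℕ} (Q Te Th : Matrix (Fin nx) (Fin nx) ℝ)
    (R Se Sh : Matrix (Fin nu) (Fin nu) ℝ) (w : ℝ) (N : ℕ) (r : HParams nx nu)
    (xs : ℕ → RVec nx) (us : ℕ → RVec nu) (p : HParams nx nu) : ℝ :=
  (∑ k ∈ Finset.range N,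
      (quadForm Q (xs k - hSeq w p.1 k) + quadForm R (us k - hSeq w p.2 k)))
    + Vh Te Th Se Sh r p

/-- `(xs, us, p)` is an optimal solution of the HMPC optimization problem for state `x` and
reference parameters `r`. -/
noncomputable def OptSol {nx nu ny : ℕ} (A : Matrix (Fin nx) (Fin nx) ℝ)
    (B : Matrix (Fin nx) (Fin nu) ℝ)
    (E : Matrix (Fin ny) (Fin nx) ℝ) (F : Matrix (Fin ny) (Fin nu) ℝ)
    (ylo yhi : RVec ny) (Q Te Th : Matrix (Fin nx) (Fin nx) ℝ)
    (R Se Sh : Matrix (Fin nu) (Fin nu) ℝ) (w σ : ℝ) (N : ℕ) (r : HParams nx nu)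
    (x : RVec nx) (xs : ℕ → RVec nx) (us : ℕ → RVec nu) (p : HParams nx nu) : Prop :=
  FeasSol A B E F ylo yhi w σ N x xs us p ∧
  ∀ xs' us' p', FeasSol A B E F ylo yhi w σ N x xs' us' p' →
    Jcost Q Te Th R Se Sh w N r xs us p ≤ Jcost Q Te Th R Se Sh w N r xs' us' p'

/-- The optimal value `H*(x; r)` of the HMPC optimization problem. -/
noncomputable def Hstar {nx nu ny : ℕ} (A : Matrix (Fin nx) (Fin nx) ℝ)
    (B : Matrix (Fin nx) (Fin nu) ℝ)
    (E : Matrix (Fin ny) (Fin nx) ℝ) (F : Matrix (Fin ny) (Fin nu) ℝ)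
    (ylo yhi : RVec ny) (Q Te Th : Matrix (Fin nx) (Fin nx) ℝ)
    (R Se Sh : Matrix (Fin nu) (Fin nu) ℝ) (w σ : ℝ) (N : ℕ) (r : HParams nx nu)
    (x : RVec nx) : ℝ :=
  sInf {J : ℝ | ∃ xs us p, FeasSol A B E F ylo yhi w σ N x xs us p ∧
    J = Jcost Q Te Th R Se Sh w N r xs us p}

/-- The controllability matrix `[B, AB, …, A^{ν−1}B]` of the pair `(A, B)`. -/
def ctrbMat {nx nu : ℕ} (A : Matrix (Fin nx) (Fin nx) ℝ) (B : Matrix (Fin nx) (Fin nu) ℝ)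
    (ν : ℕ) : Matrix (Fin nx) (Fin ν × Fin nu) ℝ :=
  Matrix.of fun i q => ((A ^ (q.1 : ℕ)) * B) i q.2

/-- Squared Euclidean norm of a vector. -/
def nsq {n : ℕ} (v : RVec n) : ℝ := ∑ i, v i ^ 2

/-- Squared Euclidean norm of a parameter pair. -/
def pNsq {nx nu : ℕ} (p : HParams nx nu) : ℝ :=
  nsq p.1.1 + nsq p.1.2.1 + nsq p.1.2.2 + nsq p.2.1 + nsq p.2.2.1 + nsq p.2.2.2

/-- `f` is `μ`-strongly convex on the parameter space:
`f z − f y ≥ ⟨∇f(y), z − y⟩ + (μ/2)‖z − y‖²` for all `z, y`. -/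
def StrConvVh {nx nu : ℕ} (μ : ℝ) (f : HParams nx nu → ℝ) : Prop :=
  ∀ z y : HParams nx nu, f z - f y ≥ (fderiv ℝ f y) (z - y) + μ / 2 * pNsq (z - y)

/-- The rotation matrix `T_w^m = [[cos w · I, −sin w · I], [sin w · I, cos w · I]] ∈ ℝ^{2m×2m}`. -/
noncomputable def TwMat (m : ℕ) (w : ℝ) : Matrix (Fin m ⊕ Fin m) (Fin m ⊕ Fin m) ℝ :=
  Matrix.fromBlocks (Real.cos w • (1 : Matrix (Fin m) (Fin m) ℝ))
    (-(Real.sin w • (1 : Matrix (Fin m) (Fin m) ℝ)))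
    (Real.sin w • (1 : Matrix (Fin m) (Fin m) ℝ))
    (Real.cos w • (1 : Matrix (Fin m) (Fin m) ℝ))

/-- The matrix `T̂_w^m = diag(I_m, T_w^m) ∈ ℝ^{3m×3m}`. -/
noncomputable def ThatMat (m : ℕ) (w : ℝ) :
    Matrix (Fin m ⊕ (Fin m ⊕ Fin m)) (Fin m ⊕ (Fin m ⊕ Fin m)) ℝ :=
  Matrix.fromBlocks (1 : Matrix (Fin m) (Fin m) ℝ) 0 0 (TwMat m w)

lemma hSeq_hatT {m : ℕ} (w : ℝ) (v : HTriple m) (k : ℕ) :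
    hSeq w (hatT w v) k = hSeq w v (k + 1) := by
  funext i
  simp only [hSeq, hatT, Pi.add_apply, Pi.smul_apply, Pi.sub_apply, smul_eq_mul,
    Nat.cast_add, Nat.cast_one]
  have hs : Real.sin (w * ((k : ℝ) + 1))
      = Real.sin (w * k) * Real.cos w + Real.cos (w * k) * Real.sin w := by
    rw [mul_add, mul_one, Real.sin_add]
  have hc : Real.cos (w * ((k : ℝ) + 1))
      = Real.cos (w * k) * Real.cos w - Real.sin (w * k) * Real.sin w := by
    rw [mul_add, mul_one, Real.cos_add]
  rw [hs, hc]; ring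

lemma hSeq_dyn {nx nu : ℕ} (A : Matrix (Fin nx) (Fin nx) ℝ) (B : Matrix (Fin nx) (Fin nu) ℝ)
    (w : ℝ) (p : HParams nx nu) (hD : inD A B w p) (k : ℕ) :
    hSeq w p.1 (k + 1) = A.mulVec (hSeq w p.1 k) + B.mulVec (hSeq w p.2 k) := by
  obtain ⟨h1, h2, h3⟩ := hD
  funext i
  have hs : Real.sin (w * ((k : ℝ) + 1))
      = Real.sin (w * k) * Real.cos w + Real.cos (w * k) * Real.sin w := by
    rw [mul_add, mul_one, Real.sin_add]
  have hc : Real.cos (w * ((k : ℝ) + 1))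
      = Real.cos (w * k) * Real.cos w - Real.sin (w * k) * Real.sin w := by
    rw [mul_add, mul_one, Real.cos_add]
  have h1' : p.1.1 i = (A.mulVec p.1.1) i + (B.mulVec p.2.1) i := by
    simpa using congrFun h1 i
  have h2' : Real.cos w * p.1.2.1 i - Real.sin w * p.1.2.2 i
      = (A.mulVec p.1.2.1) i + (B.mulVec p.2.2.1) i := by simpa using congrFun h2 i
  have h3' : Real.sin w * p.1.2.1 i + Real.cos w * p.1.2.2 i
      = (A.mulVec p.1.2.2) i + (B.mulVec p.2.2.2) i := by simpa using congrFun h3 i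
  simp only [hSeq, Matrix.mulVec_add, Matrix.mulVec_smul, Pi.add_apply, Pi.smul_apply,
    smul_eq_mul, Nat.cast_add, Nat.cast_one]
  rw [hs, hc]
  linear_combination h1' + Real.sin (w * k) * h2' + Real.cos (w * k) * h3'

lemma inD_hatT {nx nu : ℕ} (A : Matrix (Fin nx) (Fin nx) ℝ) (B : Matrix (Fin nx) (Fin nu) ℝ)
    (w : ℝ) (p : HParams nx nu) (hD : inD A B w p) :
    inD A B w (hatT w p.1, hatT w p.2) := by
  obtain ⟨h1, h2, h3⟩ := hD
  have h2' : ∀ i, Real.cos w * p.1.2.1 i - Real.sin w * p.1.2.2 i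
      = (A.mulVec p.1.2.1) i + (B.mulVec p.2.2.1) i := fun i => by simpa using congrFun h2 i
  have h3' : ∀ i, Real.sin w * p.1.2.1 i + Real.cos w * p.1.2.2 i
      = (A.mulVec p.1.2.2) i + (B.mulVec p.2.2.2) i := fun i => by simpa using congrFun h3 i
  refine ⟨h1, ?_, ?_⟩ <;> funext i <;>
    simp only [hatT, Matrix.mulVec_add, Matrix.mulVec_sub, Matrix.mulVec_smul, Pi.add_apply,
      Pi.sub_apply, Pi.smul_apply, smul_eq_mul]
  · linear_combination Real.cos w * h2' i - Real.sin w * h3' i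
  · linear_combination Real.sin w * h2' i + Real.cos w * h3' i

lemma inC_hatT {nx nu ny : ℕ} (E : Matrix (Fin ny) (Fin nx) ℝ) (F : Matrix (Fin ny) (Fin nu) ℝ)
    (ylo yhi : RVec ny) (w σ : ℝ) (p : HParams nx nu) (hC : inC E F ylo yhi σ p) :
    inC E F ylo yhi σ (hatT w p.1, hatT w p.2) := by
  intro i
  have hC' := hC i
  simp only [hatT, Matrix.mulVec_add, Matrix.mulVec_sub, Matrix.mulVec_smul, Pi.add_apply,
    Pi.sub_apply, Pi.smul_apply, smul_eq_mul] at *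
  set a := (E.mulVec p.1.2.1 + F.mulVec p.2.2.1) i with ha
  set b := (E.mulVec p.1.2.2 + F.mulVec p.2.2.2) i with hb
  have key : (Real.cos w * E.mulVec p.1.2.1 i - Real.sin w * E.mulVec p.1.2.2 i
        + (Real.cos w * F.mulVec p.2.2.1 i - Real.sin w * F.mulVec p.2.2.2 i)) ^ 2
      + (Real.sin w * E.mulVec p.1.2.1 i + Real.cos w * E.mulVec p.1.2.2 i
        + (Real.sin w * F.mulVec p.2.2.1 i + Real.cos w * F.mulVec p.2.2.2 i)) ^ 2
      = a ^ 2 + b ^ 2 := by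
    have := Real.sin_sq_add_cos_sq w
    simp only [ha, hb, Pi.add_apply]
    nlinarith [this]
  rw [key]
  exact hC'

lemma abs_harmonic_le {θ a b : ℝ} :
    |Real.sin θ * a + Real.cos θ * b| ≤ Real.sqrt (a ^ 2 + b ^ 2) := by
  have h1 : (Real.sin θ * a + Real.cos θ * b) ^ 2 ≤ a ^ 2 + b ^ 2 := by
    nlinarith [Real.sin_sq_add_cos_sq θ, sq_nonneg (Real.sin θ * b - Real.cos θ * a)]
  calc |Real.sin θ * a + Real.cos θ * b|
      = Real.sqrt ((Real.sin θ * a + Real.cos θ * b) ^ 2) := (Real.sqrt_sq_eq_abs _).symm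
    _ ≤ Real.sqrt (a ^ 2 + b ^ 2) := Real.sqrt_le_sqrt h1

lemma hSeq_constraint {nx nu ny : ℕ} (E : Matrix (Fin ny) (Fin nx) ℝ)
    (F : Matrix (Fin ny) (Fin nu) ℝ) (ylo yhi : RVec ny) (w σ : ℝ) (hσ : 0 ≤ σ)
    (p : HParams nx nu) (hC : inC E F ylo yhi σ p) (k : ℕ) (i : Fin ny) :
    ylo i ≤ (E.mulVec (hSeq w p.1 k) + F.mulVec (hSeq w p.2 k)) i
      ∧ (E.mulVec (hSeq w p.1 k) + F.mulVec (hSeq w p.2 k)) i ≤ yhi i := by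
  obtain ⟨hCu, hCl⟩ := hC i
  set a := (E.mulVec p.1.2.1 + F.mulVec p.2.2.1) i with ha
  set b := (E.mulVec p.1.2.2 + F.mulVec p.2.2.2) i with hb
  have habs := @abs_harmonic_le (w * k) a b
  obtain ⟨hlo, hhi⟩ := abs_le.mp habs
  have hval : (E.mulVec (hSeq w p.1 k) + F.mulVec (hSeq w p.2 k)) i
      = (E.mulVec p.1.1 + F.mulVec p.2.1) i + (Real.sin (w * k) * a + Real.cos (w * k) * b) := by
    simp only [hSeq, Matrix.mulVec_add, Matrix.mulVec_smul, Pi.add_apply, Pi.smul_apply,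
      smul_eq_mul, ha, hb]
    ring
  rw [hval]
  constructor <;> linarith

/-- recursive feasibility: if `x` is feasible for HMPC with feasible solution
`(xs, us, p)`, then the successor state `A x + B u⁰` is also feasible. -/
theorem statement11 {nx nu ny : ℕ}
    (A : Matrix (Fin nx) (Fin nx) ℝ) (B : Matrix (Fin nx) (Fin nu) ℝ)
    (E : Matrix (Fin ny) (Fin nx) ℝ) (F : Matrix (Fin ny) (Fin nu) ℝ)
    (ylo yhi : RVec ny) (hy : ∀ i, ylo i < yhi i)
    (w σ : ℝ) (hw : 0 < w) (hσ : 0 < σ) (N : ℕ) (hN : 1 ≤ N)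
    (x : RVec nx) (xs : ℕ → RVec nx) (us : ℕ → RVec nu) (p : HParams nx nu)
    (hfeas : FeasSol A B E F ylo yhi w σ N x xs us p) :
    Feasible A B E F ylo yhi w σ N (A.mulVec x + B.mulVec (us 0)) := by
  obtain ⟨hx0, hdyn, hcon, hterm, hD, hC⟩ := hfeas
  refine ⟨fun k => if k < N then xs (k + 1) else hSeq w p.1 (k + 1),
    fun k => if k + 1 < N then us (k + 1) else hSeq w p.2 (k + 1),
    (hatT w p.1, hatT w p.2), ?_, ?_, ?_, ?_, inD_hatT A B w p hD, inC_hatT E F ylo yhi w σ p hC⟩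
  · have h01 : 0 < N := hN
    simp only [if_pos h01]
    rw [hdyn 0 h01, hx0]
  · intro k hk
    by_cases h : k + 1 < N
    · simp only [if_pos h, if_pos hk]
      exact hdyn (k + 1) h
    · have hkN : k + 1 = N := le_antisymm hk (not_lt.mp h)
      simp only [if_neg h, if_pos hk, if_neg (by omega : ¬ k + 1 < N)]
      have hxN : xs (k + 1) = hSeq w p.1 (k + 1) := by rw [hkN]; exact hterm
      rw [hxN]
      exact hSeq_dyn A B w p hD (k + 1)
  · intro k hk i
    by_cases h : k + 1 < N
    · simp only [if_pos h, if_pos hk]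
      exact hcon (k + 1) h i
    · have hkN : k + 1 = N := le_antisymm hk (not_lt.mp h)
      simp only [if_pos hk, if_neg h]
      have hxN : xs (k + 1) = hSeq w p.1 (k + 1) := by rw [hkN]; exact hterm
      rw [hxN]
      exact hSeq_constraint E F ylo yhi w σ hσ.le p hC (k + 1) i
  · simp only [if_neg (lt_irrefl N)]
    rw [hSeq_hatT]
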